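/- Let Y be uniformly distributed on a finite abelian group A and let G be an A-valued random variable independent of Y; set X = Y + G. Suppose K = k(X) and F = f(X) are functions of X satisfying I(K ∧ F) = 0. Then I(K ∧ (F, G)) = 0. -/
import Mathlib


open Finset

namespace SC

variable {Ω : Type*} [Fintype Ω]

/-- A probability mass function on a finite sample space. -/
structure FinPMF (Ω : Type*) [Fintype Ω] where
  p : Ω → ℝ
  nonneg : ∀ ω, 0 ≤ p ω
  sum_one : ∑ ω, p ω = 1

/-- Probability of an event. -/
noncomputable def prob (μ : FinPMF Ω) (E : Set Ω) : ℝ :=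
  ∑ ω, E.indicator μ.p ω

/-- Distribution (law) of a random variable. -/
noncomputable def dist (μ : FinPMF Ω) {α : Type*} (X : Ω → α) (a : α) : ℝ :=
  prob μ {ω | X ω = a}

/-- Shannon entropy (base 2) of a finite-valued random variable. -/
noncomputable def H (μ : FinPMF Ω) {α : Type*} [Fintype α] (X : Ω → α) : ℝ :=
  -∑ a, dist μ X a * Real.logb 2 (dist μ X a)

/-- Mutual information I(X ∧ Y). -/
noncomputable def mutInf (μ : FinPMF Ω) {α β : Type*} [Fintype α] [Fintype β]
    (X : Ω → α) (Y : Ω → β) : ℝ :=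
  H μ X + H μ Y - H μ (fun ω => (X ω, Y ω))

/-- Conditional entropy H(X | Y). -/
noncomputable def condH (μ : FinPMF Ω) {α β : Type*} [Fintype α] [Fintype β]
    (X : Ω → α) (Y : Ω → β) : ℝ :=
  H μ (fun ω => (X ω, Y ω)) - H μ Y

/-- Conditional mutual information I(X ∧ Y | Z). -/
noncomputable def condMutInf (μ : FinPMF Ω) {α β γ : Type*}
    [Fintype α] [Fintype β] [Fintype γ]
    (X : Ω → α) (Y : Ω → β) (Z : Ω → γ) : ℝ :=
  H μ (fun ω => (X ω, Z ω)) + H μ (fun ω => (Y ω, Z ω))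
    - H μ (fun ω => (X ω, Y ω, Z ω)) - H μ Z

/-- Independence of two random variables: the joint law factorizes. -/
def IndepRV (μ : FinPMF Ω) {α β : Type*} (X : Ω → α) (Y : Ω → β) : Prop :=
  ∀ a b, dist μ (fun ω => (X ω, Y ω)) (a, b) = dist μ X a * dist μ Y b

/-- Kullback–Leibler divergence (base 2) between two pmfs on a finite set. -/
noncomputable def klDiv {α : Type*} [Fintype α] (P Q : α → ℝ) : ℝ :=
  ∑ a, P a * Real.logb 2 (P a / Q a)

/-- The binary entropy function (base 2). -/
noncomputable def binH (x : ℝ) : ℝ :=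
  -x * Real.logb 2 x - (1 - x) * Real.logb 2 (1 - x)

end SC
namespace SC

variable {Ω : Type*} [Fintype Ω]

open Finset Real
open scoped Classical

lemma dist_eq' (μ : FinPMF Ω) {α : Type*} (X : Ω → α) (a : α) :
    dist μ X a = ∑ ω, if X ω = a then μ.p ω else 0 := by
  classical
  unfold dist prob
  refine Finset.sum_congr rfl fun ω _ => ?_
  simp [Set.indicator_apply]

lemma sum_dist' (μ : FinPMF Ω) {α : Type*} [Fintype α] (X : Ω → α) :
    ∑ a, dist μ X a = 1 := by
  classical
  simp only [dist_eq']
  rw [Finset.sum_comm]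
  calc ∑ ω, ∑ a, (if X ω = a then μ.p ω else 0) = ∑ ω, μ.p ω := by
        refine Finset.sum_congr rfl fun ω _ => ?_
        simp
    _ = 1 := μ.sum_one

lemma H_indep' (μ : FinPMF Ω) {α β : Type*} [Fintype α] [Fintype β]
    (X : Ω → α) (Z : Ω → β) (h : IndepRV μ X Z) :
    H μ (fun ω => (X ω, Z ω)) = H μ X + H μ Z := by
  classical
  unfold H
  rw [Fintype.sum_prod_type]
  have key : ∀ a b, dist μ (fun ω => (X ω, Z ω)) (a, b) *
      Real.logb 2 (dist μ (fun ω => (X ω, Z ω)) (a, b))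
      = (dist μ X a * Real.logb 2 (dist μ X a)) * dist μ Z b
        + dist μ X a * (dist μ Z b * Real.logb 2 (dist μ Z b)) := by
    intro a b
    rw [h a b]
    rcases eq_or_ne (dist μ X a) 0 with h1 | h1
    · simp [h1]
    rcases eq_or_ne (dist μ Z b) 0 with h2 | h2
    · simp [h2]
    rw [Real.logb_mul h1 h2]
    ring
  simp only [key, Finset.sum_add_distrib, ← Finset.mul_sum, sum_dist', mul_one]
  rw [← Finset.sum_mul, sum_dist', one_mul]
  ring

lemma dist_comp_equiv' (μ : FinPMF Ω) {α α' : Type*} (e : α ≃ α') (X : Ω → α) (a' : α') :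
    dist μ (fun ω => e (X ω)) a' = dist μ X (e.symm a') := by
  classical
  simp only [dist_eq']
  refine Finset.sum_congr rfl fun ω _ => ?_
  exact if_congr (Equiv.eq_symm_apply e).symm rfl rfl

lemma H_comp_equiv' (μ : FinPMF Ω) {α α' : Type*} [Fintype α] [Fintype α']
    (e : α ≃ α') (X : Ω → α) :
    H μ (fun ω => e (X ω)) = H μ X := by
  unfold H
  congr 1
  rw [← Equiv.sum_comp e]
  refine Finset.sum_congr rfl fun a _ => ?_
  rw [dist_comp_equiv']
  simp

lemma dist_fst' (μ : FinPMF Ω) {α β : Type*} [Fintype β] (X : Ω → α) (Z : Ω → β) (a : α) :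
    dist μ X a = ∑ b, dist μ (fun ω => (X ω, Z ω)) (a, b) := by
  classical
  simp only [dist_eq', Prod.mk.injEq]
  rw [Finset.sum_comm]
  refine Finset.sum_congr rfl fun ω _ => ?_
  by_cases h1 : X ω = a <;> simp [h1, Finset.sum_ite_eq]

lemma dist_pair_G' {A : Type*} [Fintype A] [AddCommGroup A] {γ : Type*}
    (μ : FinPMF Ω) (Y G : Ω → A)
    (hY : ∀ a, dist μ Y a = 1 / Fintype.card A) (hind : IndepRV μ Y G)
    (h : A → γ) (c : γ) (g : A) :
    dist μ (fun ω => (h (Y ω + G ω), G ω)) (c, g)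
      = (∑ a : A, if h a = c then (1:ℝ) else 0) / Fintype.card A * dist μ G g := by
  classical
  simp only [dist_eq', Prod.mk.injEq]
  have step : ∀ ω, (if h (Y ω + G ω) = c ∧ G ω = g then μ.p ω else 0)
      = ∑ a : A, if (Y ω = a ∧ G ω = g) ∧ h (a + g) = c then μ.p ω else 0 := by
    intro ω
    have hz : ∀ b ∈ Finset.univ, b ≠ Y ω →
        (if (Y ω = b ∧ G ω = g) ∧ h (b + g) = c then μ.p ω else 0) = 0 := by
      intro b _ hb
      apply if_neg
      rintro ⟨⟨h1, -⟩, -⟩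
      exact hb h1.symm
    rw [Finset.sum_eq_single_of_mem (Y ω) (Finset.mem_univ _) hz]
    by_cases h2 : G ω = g <;> by_cases h3 : h (Y ω + g) = c <;> simp [h2, h3]
  simp only [step]
  rw [Finset.sum_comm]
  have reindex : (∑ a : A, if h a = c then (1:ℝ) else 0)
      = ∑ a : A, if h (a + g) = c then (1:ℝ) else 0 :=
    Fintype.sum_equiv (Equiv.subRight g) _ _ (fun a => by simp)
  rw [reindex, Finset.sum_div, Finset.sum_mul]
  refine Finset.sum_congr rfl fun a _ => ?_
  by_cases hc : h (a + g) = c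
  · have e : (∑ ω, if (Y ω = a ∧ G ω = g) ∧ h (a + g) = c then μ.p ω else 0)
        = dist μ (fun ω => (Y ω, G ω)) (a, g) := by
      rw [dist_eq']
      refine Finset.sum_congr rfl fun ω _ => ?_
      by_cases h1 : Y ω = a <;> by_cases h2 : G ω = g <;> simp [h1, h2, hc, Prod.ext_iff]
    rw [e, hind a g, hY a]
    simp only [hc, if_true]
    rw [dist_eq']
  · simp [hc]

lemma dist_h' {A : Type*} [Fintype A] [AddCommGroup A] {γ : Type*} [Fintype γ]
    (μ : FinPMF Ω) (Y G : Ω → A)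
    (hY : ∀ a, dist μ Y a = 1 / Fintype.card A) (hind : IndepRV μ Y G)
    (h : A → γ) (c : γ) :
    dist μ (fun ω => h (Y ω + G ω)) c
      = (∑ a : A, if h a = c then (1:ℝ) else 0) / Fintype.card A := by
  rw [dist_fst' μ _ G c]
  simp only [dist_pair_G' μ Y G hY hind h c]
  rw [← Finset.mul_sum, sum_dist', mul_one]

lemma indep_h' {A : Type*} [Fintype A] [AddCommGroup A] {γ : Type*} [Fintype γ]
    (μ : FinPMF Ω) (Y G : Ω → A)
    (hY : ∀ a, dist μ Y a = 1 / Fintype.card A) (hind : IndepRV μ Y G)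
    (h : A → γ) :
    IndepRV μ (fun ω => h (Y ω + G ω)) G := by
  intro c g
  rw [dist_pair_G' μ Y G hY hind h c g, dist_h' μ Y G hY hind h c]

end SC



/-- with Y uniform on a finite abelian group A and independent of G,
X = Y + G, K = k(X), F = f(X), I(K ∧ F) = 0 implies I(K ∧ (F, G)) = 0. -/
theorem stmt_6 {Ω A β δ : Type*} [Fintype Ω] [Fintype A] [AddCommGroup A]
    [Fintype β] [Fintype δ]
    (μ : SC.FinPMF Ω) (Y G : Ω → A) (k : A → δ) (f : A → β)
    (hY : ∀ a, SC.dist μ Y a = 1 / Fintype.card A)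
    (hind : SC.IndepRV μ Y G)
    (hKF : SC.mutInf μ (fun ω => k (Y ω + G ω)) (fun ω => f (Y ω + G ω)) = 0) :
    SC.mutInf μ (fun ω => k (Y ω + G ω)) (fun ω => (f (Y ω + G ω), G ω)) = 0 := by
  classical
  have iKFG : SC.IndepRV μ (fun ω => (k (Y ω + G ω), f (Y ω + G ω))) G :=
    SC.indep_h' μ Y G hY hind (fun a => (k a, f a))
  have iFG : SC.IndepRV μ (fun ω => f (Y ω + G ω)) G :=
    SC.indep_h' μ Y G hY hind f
  have e1 : SC.H μ (fun ω => ((k (Y ω + G ω), f (Y ω + G ω)), G ω))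
      = SC.H μ (fun ω => (k (Y ω + G ω), f (Y ω + G ω))) + SC.H μ G :=
    SC.H_indep' μ _ _ iKFG
  have e2 : SC.H μ (fun ω => (f (Y ω + G ω), G ω))
      = SC.H μ (fun ω => f (Y ω + G ω)) + SC.H μ G :=
    SC.H_indep' μ _ _ iFG
  have e3 : SC.H μ (fun ω => (k (Y ω + G ω), (f (Y ω + G ω), G ω)))
      = SC.H μ (fun ω => ((k (Y ω + G ω), f (Y ω + G ω)), G ω)) :=
    SC.H_comp_equiv' μ (Equiv.prodAssoc δ β A) (fun ω => ((k (Y ω + G ω), f (Y ω + G ω)), G ω))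
  unfold SC.mutInf at hKF ⊢
  rw [e2, e3, e1]
  linarith
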